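/- arXiv:2508.20005 — 2 statements merged into one kernel-verified Lean document; each statement's English description precedes it below -/
import Mathlib

section
/- Let G be an infinite residually finite group with scale (Γ_n) and X the associated odometer. For every n and every a ∈ G/Γ_n, the automorphism group of the minimal system ([a]_n, Γ_n) given by left multiplication of Γ_n equals {x ↦ xξ^{-1} restricted to [a]_n : ξ ∈ [1]_n}, i.e., all right translations by elements of the clopen subgroup [1]_n. -/
open scoped Pointwise

noncomputable section
namespace OdoPaper


variable {G : Type*} [Group G]

/-- Each finite quotient carries the discrete topology. -/
instance quotTop (Γ : Subgroup G) : TopologicalSpace (G ⧸ Γ) := ⊥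
instance quotDisc (Γ : Subgroup G) : DiscreteTopology (G ⧸ Γ) := ⟨rfl⟩

/-- The natural projection between coset spaces of nested subgroups. -/
def projOfLE {H K : Subgroup G} (h : H ≤ K) : G ⧸ H → G ⧸ K :=
  Quotient.map' id fun a b hab => by
    rw [QuotientGroup.leftRel_apply] at hab ⊢
    exact h hab

/-- The odometer space for a (not necessarily normal) decreasing sequence of subgroups. -/
abbrev OdoSp (Γ : ℕ → Subgroup G) (hdec : ∀ n, Γ (n + 1) ≤ Γ n) : Type _ :=
  {x : ∀ n, G ⧸ Γ n // ∀ n, projOfLE (hdec n) (x (n + 1)) = x n}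

/-- The bonding homomorphisms for a decreasing sequence of normal subgroups. -/
def odoMap (Γ : ℕ → Subgroup G) [∀ n, (Γ n).Normal] (hdec : ∀ n, Γ (n + 1) ≤ Γ n) (n : ℕ) :
    G ⧸ Γ (n + 1) →* G ⧸ Γ n :=
  QuotientGroup.map _ _ (MonoidHom.id G) (hdec n)

/-- The odometer associated to a decreasing sequence of normal subgroups, as a subgroup of
the product of the finite quotients. -/
def Odo (Γ : ℕ → Subgroup G) [∀ n, (Γ n).Normal] (hdec : ∀ n, Γ (n + 1) ≤ Γ n) :
    Subgroup (∀ n, G ⧸ Γ n) where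
  carrier := {x | ∀ n, odoMap Γ hdec n (x (n + 1)) = x n}
  one_mem' := fun n => map_one _
  mul_mem' := fun {a b} ha hb n => by
    simp only [Pi.mul_apply, map_mul, ha n, hb n]
  inv_mem' := fun {a} ha n => by
    simp only [Pi.inv_apply, map_inv, ha n]

/-- The canonical homomorphism from `G` to its odometer. -/
def tau (Γ : ℕ → Subgroup G) [∀ n, (Γ n).Normal] (hdec : ∀ n, Γ (n + 1) ≤ Γ n) :
    G →* Odo Γ hdec where
  toFun g := ⟨fun n => QuotientGroup.mk g, fun n => rfl⟩
  map_one' := rfl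
  map_mul' g₁ g₂ := rfl

/-- Cylinder set of level `n` through the coset `a`. -/
def cyl (Γ : ℕ → Subgroup G) [∀ n, (Γ n).Normal] (hdec : ∀ n, Γ (n + 1) ≤ Γ n) (n : ℕ)
    (a : G ⧸ Γ n) : Set (Odo Γ hdec) :=
  {x | (x : ∀ k, G ⧸ Γ k) n = a}

/-- The metric on the odometer: `d(x,y) = 2^{-min{n : xₙ ≠ yₙ}}`. -/
def odoDist {Γ : ℕ → Subgroup G} [∀ n, (Γ n).Normal] {hdec : ∀ n, Γ (n + 1) ≤ Γ n}
    (x y : Odo Γ hdec) : ℝ :=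
  letI := Classical.dec (x = y)
  if x = y then 0
  else (1 / 2 : ℝ) ^ sInf {n : ℕ | (x : ∀ k, G ⧸ Γ k) n ≠ (y : ∀ k, G ⧸ Γ k) n}



/-- The group of self-homeomorphisms of a space, with `(f * g) x = f (g x)`. -/
instance homeoGroup (X : Type*) [TopologicalSpace X] : Group (X ≃ₜ X) where
  mul f g := g.trans f
  one := Homeomorph.refl X
  inv := Homeomorph.symm
  mul_assoc _ _ _ := Homeomorph.ext fun _ => rfl
  one_mul _ := Homeomorph.ext fun _ => rfl
  mul_one _ := Homeomorph.ext fun _ => rfl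
  inv_mul_cancel f := Homeomorph.ext fun x => f.symm_apply_apply x

theorem homeo_mul_apply {X : Type*} [TopologicalSpace X] (f g : X ≃ₜ X) (x : X) :
    (f * g) x = f (g x) := rfl

theorem homeo_inv_apply {X : Type*} [TopologicalSpace X] (f : X ≃ₜ X) (x : X) :
    f⁻¹ x = f.symm x := rfl

section Full

variable (X : Type*) [Group X] [TopologicalSpace X]

/-- Membership in the topological full group of the right translation action of `X`
on itself: on each piece of a finite clopen partition, `f` is a right translation. -/
def InFullR (f : X ≃ₜ X) : Prop :=
  ∃ ξ : X → X, IsLocallyConstant ξ ∧ (Set.range ξ).Finite ∧ ∀ x, f x = x * (ξ x)⁻¹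

/-- Membership in the topological full group of the left translation action. -/
def InFullL (f : X ≃ₜ X) : Prop :=
  ∃ ξ : X → X, IsLocallyConstant ξ ∧ (Set.range ξ).Finite ∧ ∀ x, f x = ξ x * x

/-- The topological full group `[[X]]_R` of the right translation action. -/
def TFGR : Subgroup (X ≃ₜ X) where
  carrier := {f | InFullR X f}
  one_mem' := ⟨fun _ => 1, IsLocallyConstant.const 1,
    (Set.finite_singleton 1).subset (Set.range_subset_iff.2 fun _ => rfl),
    fun x => by simp [homeo_mul_apply]⟩
  mul_mem' := by
    rintro f g ⟨ξf, hf1, hf2, hf3⟩ ⟨ξg, hg1, hg2, hg3⟩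
    refine ⟨fun x => ξf (g x) * ξg x,
      (hf1.comp_continuous g.continuous).mul hg1,
      (hf2.mul hg2).subset ?_, fun x => ?_⟩
    · rintro y ⟨x, rfl⟩
      exact Set.mul_mem_mul ⟨g x, rfl⟩ ⟨x, rfl⟩
    · show f (g x) = x * (ξf (g x) * ξg x)⁻¹
      rw [mul_inv_rev, ← mul_assoc, ← hg3 x, ← hf3 (g x)]
  inv_mem' := by
    rintro f ⟨ξ, h1, h2, h3⟩
    refine ⟨fun x => (ξ (f.symm x))⁻¹,
      (h1.comp_continuous f.symm.continuous).inv, (h2.inv).subset ?_, fun x => ?_⟩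
    · rintro y ⟨x, rfl⟩
      exact Set.inv_mem_inv.2 ⟨f.symm x, rfl⟩
    · have h := h3 (f.symm x)
      rw [f.apply_symm_apply] at h
      show f.symm x = x * ((ξ (f.symm x))⁻¹)⁻¹
      rw [inv_inv]
      exact (eq_mul_inv_iff_mul_eq.mp h).symm

/-- The topological full group `[[X]]_L` of the left translation action. -/
def TFGL : Subgroup (X ≃ₜ X) where
  carrier := {f | InFullL X f}
  one_mem' := ⟨fun _ => 1, IsLocallyConstant.const 1,
    (Set.finite_singleton 1).subset (Set.range_subset_iff.2 fun _ => rfl),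
    fun x => by simp⟩
  mul_mem' := by
    rintro f g ⟨ξf, hf1, hf2, hf3⟩ ⟨ξg, hg1, hg2, hg3⟩
    refine ⟨fun x => ξf (g x) * ξg x,
      (hf1.comp_continuous g.continuous).mul hg1,
      (hf2.mul hg2).subset ?_, fun x => ?_⟩
    · rintro y ⟨x, rfl⟩
      exact Set.mul_mem_mul ⟨g x, rfl⟩ ⟨x, rfl⟩
    · show f (g x) = ξf (g x) * ξg x * x
      rw [mul_assoc, ← hg3 x, ← hf3 (g x)]
  inv_mem' := by
    rintro f ⟨ξ, h1, h2, h3⟩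
    refine ⟨fun x => (ξ (f.symm x))⁻¹,
      (h1.comp_continuous f.symm.continuous).inv, (h2.inv).subset ?_, fun x => ?_⟩
    · rintro y ⟨x, rfl⟩
      exact Set.inv_mem_inv.2 ⟨f.symm x, rfl⟩
    · have h := h3 (f.symm x)
      rw [f.apply_symm_apply] at h
      show f.symm x = (ξ (f.symm x))⁻¹ * x
      exact eq_inv_mul_iff_mul_eq.mpr h.symm

/-- `f` commutes with left translation by every element of `S`. -/
def IsAutLOn (S : Set X) (f : X ≃ₜ X) : Prop :=
  ∀ s ∈ S, ∀ x, f (s * x) = s * f x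

theorem IsAutLOn.one (S : Set X) : IsAutLOn X S 1 := fun _ _ _ => rfl

theorem IsAutLOn.mul {S T : Set X} {f g : X ≃ₜ X} (hf : IsAutLOn X S f)
    (hg : IsAutLOn X T g) : IsAutLOn X (S ∩ T) (f * g) := fun s hs x => by
  rw [homeo_mul_apply, hg s hs.2, hf s hs.1, homeo_mul_apply]

theorem IsAutLOn.inv {S : Set X} {f : X ≃ₜ X} (hf : IsAutLOn X S f) :
    IsAutLOn X S f⁻¹ := fun s hs x => by
  rw [homeo_inv_apply]
  have h := hf s hs (f.symm x)
  rw [f.apply_symm_apply] at h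
  rw [← h, f.symm_apply_apply]
  rfl

/-- The group of automorphisms of the left translation action of `S ⊆ X` on `X`. -/
def AutLgrp (S : Set X) : Subgroup (X ≃ₜ X) where
  carrier := {f | IsAutLOn X S f}
  one_mem' := IsAutLOn.one X S
  mul_mem' := fun {f g} hf hg => by
    have := IsAutLOn.mul X (S := S) (T := S) hf hg
    simpa using this
  inv_mem' := fun {f} hf => IsAutLOn.inv X hf

end Full



section Stab
variable (X : Type*) [Group X] [TopologicalSpace X]

/-- A (finitely additive) invariant mean: the classical definition of amenability for
(discrete) groups. -/
def IsAmenable (Γ : Type*) [Group Γ] : Prop :=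
  ∃ m : Set Γ → ℝ, (∀ A, 0 ≤ m A) ∧ m Set.univ = 1 ∧
    (∀ A B, Disjoint A B → m (A ∪ B) = m A + m B) ∧
    ∀ (g : Γ) (A), m ((g * ·) '' A) = m A

/-- `C` is a minimal component for the left translation action of the subset `T ⊆ X`. -/
def IsMinCompL (T : Set X) (C : Set X) : Prop :=
  C.Nonempty ∧ IsClosed C ∧ (∀ t ∈ T, ∀ x ∈ C, t * x ∈ C) ∧
    ∀ x ∈ C, C ⊆ closure ((· * x) '' T)

/-- The subgroup `[[X]]_{U,L}` of homeomorphisms acting as a left translation on each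
left coset of `U`. -/
def fullUL (U : Subgroup X) : Subgroup (X ≃ₜ X) where
  carrier := {f | ∀ a : X, ∃ ξ : X, ∀ x : X,
    (QuotientGroup.mk x : X ⧸ U) = QuotientGroup.mk a → f x = ξ * x}
  one_mem' := fun a => ⟨1, fun x _ => (one_mul x).symm⟩
  mul_mem' := by
    intro f g hf hg a
    obtain ⟨ξg, hξg⟩ := hg a
    obtain ⟨ξf, hξf⟩ := hf (ξg * a)
    refine ⟨ξf * ξg, fun x hx => ?_⟩
    have hx' : (QuotientGroup.mk (ξg * x) : X ⧸ U) = QuotientGroup.mk (ξg * a) := by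
      rw [QuotientGroup.eq] at hx ⊢
      simpa [mul_assoc] using hx
    show f (g x) = ξf * ξg * x
    rw [hξg x hx, hξf (ξg * x) hx', mul_assoc]
  inv_mem' := by
    intro f hf a
    obtain ⟨ξ, hξ⟩ := hf (f.symm a)
    refine ⟨ξ⁻¹, fun x hx => ?_⟩
    have ha : f (f.symm a) = ξ * f.symm a := hξ _ rfl
    rw [f.apply_symm_apply] at ha
    have hx' : (QuotientGroup.mk (ξ⁻¹ * x) : X ⧸ U) = QuotientGroup.mk (f.symm a) := by
      rw [QuotientGroup.eq] at hx ⊢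
      have : f.symm a = ξ⁻¹ * a := eq_inv_mul_iff_mul_eq.mpr ha.symm
      rw [this]
      simpa [mul_assoc] using hx
    have := hξ (ξ⁻¹ * x) hx'
    rw [mul_inv_cancel_left] at this
    show f.symm x = ξ⁻¹ * x
    conv_lhs => rw [← this]
    rw [f.symm_apply_apply]
end Stab

section Full0
variable (X : Type*) [Group X] [TopologicalSpace X]

/-- The subgroup `[[X]]⁰_{U,L}` of elements of the topological full group preserving each
left coset `aU` and acting on it by left multiplication by an element of `aUa⁻¹`. -/
def full0L (U : Subgroup X) : Subgroup (X ≃ₜ X) where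
  carrier := {f | ∀ a : X, ∃ u ∈ U, ∀ x : X,
    (QuotientGroup.mk x : X ⧸ U) = QuotientGroup.mk a → f x = a * u * a⁻¹ * x}
  one_mem' := fun a => ⟨1, U.one_mem, fun x _ => by
    show x = a * 1 * a⁻¹ * x
    simp⟩
  mul_mem' := by
    intro f g hf hg a
    obtain ⟨ug, hugU, hg'⟩ := hg a
    obtain ⟨uf, hufU, hf'⟩ := hf a
    refine ⟨uf * ug, U.mul_mem hufU hugU, fun x hx => ?_⟩
    have hgx : (QuotientGroup.mk (g x) : X ⧸ U) = QuotientGroup.mk a := by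
      rw [hg' x hx]
      rw [QuotientGroup.eq] at hx ⊢
      have h : (a * ug * a⁻¹ * x)⁻¹ * a = x⁻¹ * a * ug⁻¹ := by group
      rw [h]
      exact U.mul_mem hx (U.inv_mem hugU)
    show f (g x) = a * (uf * ug) * a⁻¹ * x
    rw [hf' (g x) hgx, hg' x hx]
    group
  inv_mem' := by
    intro f hf a
    obtain ⟨u, huU, hu⟩ := hf a
    refine ⟨u⁻¹, U.inv_mem huU, fun x hx => ?_⟩
    have hx' : (QuotientGroup.mk (a * u⁻¹ * a⁻¹ * x) : X ⧸ U) = QuotientGroup.mk a := by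
      rw [QuotientGroup.eq] at hx ⊢
      have h : (a * u⁻¹ * a⁻¹ * x)⁻¹ * a = x⁻¹ * a * u := by group
      rw [h]
      exact U.mul_mem hx huU
    have h2 := hu _ hx'
    have h3 : f (a * u⁻¹ * a⁻¹ * x) = x := by rw [h2]; group
    show f.symm x = a * u⁻¹ * a⁻¹ * x
    conv_lhs => rw [← h3]
    rw [f.symm_apply_apply]

end Full0

section StabAut
variable {G : Type*} [Group G]

/-- The stabilized automorphism group of the (left) odometer: homeomorphisms commuting
with the left translation action of some finite-index subgroup of `G`. -/
def stabAut (Γ : ℕ → Subgroup G) [∀ n, (Γ n).Normal] (hdec : ∀ n, Γ (n + 1) ≤ Γ n) :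
    Subgroup (↥(Odo Γ hdec) ≃ₜ ↥(Odo Γ hdec)) where
  carrier := {f | ∃ H : Subgroup G, H.FiniteIndex ∧
    IsAutLOn _ (tau Γ hdec '' (H : Set G)) f}
  one_mem' := ⟨⊤, inferInstance, IsAutLOn.one _ _⟩
  mul_mem' := by
    rintro f g ⟨H₁, h₁, hf⟩ ⟨H₂, h₂, hg⟩
    haveI := h₁; haveI := h₂
    refine ⟨H₁ ⊓ H₂, inferInstance, ?_⟩
    rintro s ⟨γ, hγ, rfl⟩ x
    have hγ' := Subgroup.mem_inf.mp hγ
    rw [homeo_mul_apply, hg _ ⟨γ, hγ'.2, rfl⟩, hf _ ⟨γ, hγ'.1, rfl⟩, homeo_mul_apply]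
  inv_mem' := by
    rintro f ⟨H, h, hf⟩
    exact ⟨H, h, IsAutLOn.inv _ hf⟩

/-- The clopen subgroup `[1]_n` of the odometer (kernel of the projection to level `n`). -/
def levelKer (Γ : ℕ → Subgroup G) [∀ n, (Γ n).Normal] (hdec : ∀ n, Γ (n + 1) ≤ Γ n)
    (n : ℕ) : Subgroup ↥(Odo Γ hdec) :=
  ((Pi.evalMonoidHom (fun k => G ⧸ Γ k) n).comp (Odo Γ hdec).subtype).ker

end StabAut

section Adic

/-- The subgroups `m^n ℤ` of `ℤ`, multiplicatively. -/
def zmSub (m : ℕ) (n : ℕ) : Subgroup (Multiplicative ℤ) :=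
  Subgroup.closure {Multiplicative.ofAdd ((m : ℤ) ^ n)}

theorem zmdec (m : ℕ) : ∀ n, zmSub m (n + 1) ≤ zmSub m n := fun n => by
  rw [zmSub, Subgroup.closure_le]
  intro y hy
  rw [Set.mem_singleton_iff] at hy
  subst hy
  rw [SetLike.mem_coe, zmSub, Subgroup.mem_closure_singleton]
  refine ⟨(m : ℤ), ?_⟩
  rw [← ofAdd_zsmul]
  congr 1
  rw [smul_eq_mul, pow_succ]
  ring

/-- The `m`-adic odometer group `ℤ_m`, the inverse limit of `ℤ/m^nℤ`. -/
def Zm (m : ℕ) : Subgroup (∀ n, Multiplicative ℤ ⧸ zmSub m n) := Odo (zmSub m) (zmdec m)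

/-- The scale of `ℤ²` generated by `(p^n, 0)` and `(0, q^n)`, multiplicatively. -/
def zsqSub (p q : ℕ) (n : ℕ) : Subgroup (Multiplicative (ℤ × ℤ)) :=
  Subgroup.closure {Multiplicative.ofAdd ((((p : ℤ) ^ n, 0) : ℤ × ℤ)),
    Multiplicative.ofAdd ((((0 : ℤ), (q : ℤ) ^ n) : ℤ × ℤ))}

theorem zsqdec (p q : ℕ) : ∀ n, zsqSub p q (n + 1) ≤ zsqSub p q n := fun n => by
  rw [zsqSub, Subgroup.closure_le]
  intro y hy
  rw [Set.mem_insert_iff, Set.mem_singleton_iff] at hy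
  rcases hy with rfl | rfl
  · rw [SetLike.mem_coe]
    have h : (Multiplicative.ofAdd ((((p : ℤ) ^ n, 0) : ℤ × ℤ))) ^ ((p : ℕ) : ℤ) =
        Multiplicative.ofAdd ((((p : ℤ) ^ (n + 1), 0) : ℤ × ℤ)) := by
      rw [← ofAdd_zsmul]
      congr 1
      rw [Prod.smul_mk, smul_eq_mul, smul_eq_mul, pow_succ]
      simp [Prod.ext_iff]; ring
    rw [← h]
    exact Subgroup.zpow_mem _ (Subgroup.subset_closure (by simp [zsqSub])) _
  · rw [SetLike.mem_coe]
    have h : (Multiplicative.ofAdd ((((0 : ℤ), (q : ℤ) ^ n) : ℤ × ℤ))) ^ ((q : ℕ) : ℤ) =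
        Multiplicative.ofAdd ((((0 : ℤ), (q : ℤ) ^ (n + 1)) : ℤ × ℤ)) := by
      rw [← ofAdd_zsmul]
      congr 1
      rw [Prod.smul_mk, smul_eq_mul, smul_eq_mul, pow_succ]
      simp [Prod.ext_iff]; ring
    rw [← h]
    exact Subgroup.zpow_mem _ (Subgroup.subset_closure (by simp [zsqSub])) _

end Adic

/-- `C` is a minimal component of the action of the subgroup `H ≤ G` on `X` via `ρ`. -/
def IsMinCompAct {G X : Type*} [Group G] [TopologicalSpace X] (ρ : G →* (X ≃ₜ X))
    (H : Subgroup G) (C : Set X) : Prop :=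
  C.Nonempty ∧ IsClosed C ∧ (∀ h ∈ H, ∀ x ∈ C, ρ h x ∈ C) ∧
    ∀ x ∈ C, C ⊆ closure {y | ∃ h ∈ H, y = ρ h x}

/-! Since `τ(G)` is dense in the odometer and `[a]ₙ` is open, the `τ(Γₙ)`-orbit of any
`x₀ = τ b ∈ [a]ₙ` is dense in `[a]ₙ`. An automorphism `f` agrees on this orbit with right
translation by `x₀⁻¹ f(x₀)`, hence, by continuity, on all of `[a]ₙ`. -/

section Translation

variable {X : Type*} [Group X] [TopologicalSpace X] [ContinuousMul X] [T2Space X]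

theorem eqOn_mul_right_of_subset_closure_orbit {S C : Set X} {f : X → X} {x₀ : X}
    (hf : ContinuousOn f C) (hcomm : ∀ s ∈ S, f (s * x₀) = s * f x₀)
    (horbit : (· * x₀) '' S ⊆ C) (hdense : C ⊆ closure ((· * x₀) '' S)) :
    Set.EqOn f (· * (x₀⁻¹ * f x₀)) C := by
  refine Set.EqOn.of_subset_closure ?_ hf (continuous_mul_const _).continuousOn horbit hdense
  rintro _ ⟨s, hs, rfl⟩
  simp [hcomm s hs, mul_assoc]

end Translation

section Odometer

variable {G : Type*} [Group G] {Γ : ℕ → Subgroup G} [∀ n, (Γ n).Normal]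
  {hdec : ∀ n, Γ (n + 1) ≤ Γ n}

theorem Odo.apply_eq_of_le (x : Odo Γ hdec) {c : G} {k m : ℕ} (hkm : k ≤ m)
    (h : (x : ∀ n, G ⧸ Γ n) m = c) : (x : ∀ n, G ⧸ Γ n) k = c := by
  induction m, hkm using Nat.le_induction with
  | base => exact h
  | succ m _ ih => exact ih (by rw [← x.2 m, h]; rfl)

theorem denseRange_tau : DenseRange (tau Γ hdec) := by
  intro x
  choose c hc using fun m => QuotientGroup.mk_surjective ((x : ∀ n, G ⧸ Γ n) m)
  refine mem_closure_of_tendsto (f := fun m => tau Γ hdec (c m)) (b := Filter.atTop) ?_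
    (.of_forall fun m => ⟨c m, rfl⟩)
  rw [tendsto_subtype_rng, tendsto_pi_nhds]
  intro k
  refine tendsto_const_nhds.congr' ?_
  filter_upwards [Filter.eventually_ge_atTop k] with m hkm
  exact Odo.apply_eq_of_le x hkm (hc m).symm

theorem isOpen_cyl (n : ℕ) (a : G ⧸ Γ n) : IsOpen (cyl Γ hdec n a) :=
  have hcont : Continuous fun x : Odo Γ hdec => (x : ∀ k, G ⧸ Γ k) n :=
    (continuous_apply n).comp continuous_subtype_val
  (isOpen_discrete {a}).preimage hcont

theorem tau_mul_mem_cyl {n : ℕ} {a : G ⧸ Γ n} {γ : G} (hγ : γ ∈ Γ n) {x : Odo Γ hdec}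
    (hx : x ∈ cyl Γ hdec n a) : tau Γ hdec γ * x ∈ cyl Γ hdec n a := by
  show (γ : G ⧸ Γ n) * (x : ∀ k, G ⧸ Γ k) n = a
  rw [(QuotientGroup.eq_one_iff γ).2 hγ, one_mul]
  exact hx

theorem cyl_subset_closure_orbit (n : ℕ) (b : G) :
    cyl Γ hdec n b ⊆ closure ((· * tau Γ hdec b) '' (tau Γ hdec '' Γ n)) := by
  refine (Dense.open_subset_closure_inter denseRange_tau (isOpen_cyl n (b : G ⧸ Γ n))).trans
    (closure_mono ?_)
  rintro _ ⟨hg, g, rfl⟩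
  exact ⟨tau Γ hdec (g / b), ⟨g / b, QuotientGroup.eq_iff_div_mem.1 hg, rfl⟩,
    by simp only [← map_mul, div_mul_cancel]⟩

end Odometer

theorem stmt13_general {G : Type*} [Group G] (Γ : ℕ → Subgroup G) [∀ n, (Γ n).Normal]
    (hdec : ∀ n, Γ (n + 1) ≤ Γ n) (n : ℕ) (a : G ⧸ Γ n) :
    ∀ f g : ↥(Odo Γ hdec) → ↥(Odo Γ hdec),
      ContinuousOn f (cyl Γ hdec n a) → ContinuousOn g (cyl Γ hdec n a) →
      Set.MapsTo f (cyl Γ hdec n a) (cyl Γ hdec n a) →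
      Set.MapsTo g (cyl Γ hdec n a) (cyl Γ hdec n a) →
      (∀ x ∈ cyl Γ hdec n a, g (f x) = x) → (∀ x ∈ cyl Γ hdec n a, f (g x) = x) →
      ((∀ γ ∈ Γ n, ∀ x ∈ cyl Γ hdec n a, f (tau Γ hdec γ * x) = tau Γ hdec γ * f x) ↔
        ∃ ξ : ↥(Odo Γ hdec), (ξ : ∀ k, G ⧸ Γ k) n = 1 ∧ ∀ x ∈ cyl Γ hdec n a, f x = x * ξ⁻¹) := by
  intro f _ hf _ hmaps _ _ _
  obtain ⟨b, rfl⟩ := QuotientGroup.mk_surjective a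
  constructor
  · intro hcomm
    set x₀ := tau Γ hdec b
    have hx₀ : x₀ ∈ cyl Γ hdec n b := rfl
    have hfx₀ : ((f x₀ : Odo Γ hdec) : ∀ k, G ⧸ Γ k) n = b := hmaps hx₀
    have htrans := eqOn_mul_right_of_subset_closure_orbit hf
      (Set.forall_mem_image.2 fun γ hγ => hcomm γ hγ x₀ hx₀)
      (by rintro _ ⟨_, ⟨γ, hγ, rfl⟩, rfl⟩; exact tau_mul_mem_cyl hγ hx₀)
      (cyl_subset_closure_orbit n b)
    refine ⟨(x₀⁻¹ * f x₀)⁻¹, ?_, fun x hx => by rw [inv_inv]; exact htrans hx⟩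
    simp only [Subgroup.coe_inv, Subgroup.coe_mul, Pi.inv_apply, Pi.mul_apply, hfx₀]
    rw [show (x₀ : ∀ k, G ⧸ Γ k) n = b from hx₀, inv_mul_cancel, inv_one]
  · rintro ⟨ξ, -, hξ⟩ γ hγ x hx
    rw [hξ _ (tau_mul_mem_cyl hγ hx), hξ x hx, mul_assoc]

/-- the automorphisms of the minimal system `([a]ₙ, Γₙ)` are exactly the
right translations by elements of the clopen subgroup `[1]ₙ`. -/
theorem stmt13 {G : Type*} [Group G] (Γ : ℕ → Subgroup G) [∀ n, (Γ n).Normal]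
    [∀ n, (Γ n).FiniteIndex] (hdec : ∀ n, Γ (n + 1) ≤ Γ n)
    (htriv : ∀ g : G, (∀ n, g ∈ Γ n) → g = 1) [Infinite G] (n : ℕ) (a : G ⧸ Γ n) :
    ∀ f g : ↥(Odo Γ hdec) → ↥(Odo Γ hdec),
      ContinuousOn f (cyl Γ hdec n a) → ContinuousOn g (cyl Γ hdec n a) →
      Set.MapsTo f (cyl Γ hdec n a) (cyl Γ hdec n a) →
      Set.MapsTo g (cyl Γ hdec n a) (cyl Γ hdec n a) →
      (∀ x ∈ cyl Γ hdec n a, g (f x) = x) → (∀ x ∈ cyl Γ hdec n a, f (g x) = x) →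
      ((∀ γ ∈ Γ n, ∀ x ∈ cyl Γ hdec n a, f (tau Γ hdec γ * x) = tau Γ hdec γ * f x) ↔
        ∃ ξ : ↥(Odo Γ hdec), (ξ : ∀ k, G ⧸ Γ k) n = 1 ∧ ∀ x ∈ cyl Γ hdec n a, f x = x * ξ⁻¹) :=
  stmt13_general Γ hdec n a

end OdoPaper
end
end

section
/- Let G be an infinite residually finite group with scale (Γ_n) and X the odometer. For every finite-index subgroup H ≤ G, there exists n ∈ ℕ such that ⟨H, Γ_k⟩ = ⟨H, Γ_n⟩ for all k ≥ n, and moreover Aut(X, H)_L = Aut(X, ⟨H, Γ_n⟩)_L ⊆ Aut(X, Γ_n)_L. -/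
/-!
The indices `[G : H ⊔ Γₖ]` increase with `k` and are bounded by `[G : H]`, so the chain `H ⊔ Γₖ`
stabilises at some `n`. An element `g ∈ H ⊔ Γₙ` then lies in `H Γₖ` for every `k`, so `τ g` is a
limit of points of `τ(H)`. The left translations commuting with a homeomorphism `f` of the
odometer form a closed set, hence commuting with `τ(H)` already forces commuting with
`τ(H ⊔ Γₙ) ⊇ τ(Γₙ)`.
-/

open scoped Pointwise

noncomputable section
namespace OdoPaper


variable {G : Type*} [Group G]

open Filter Topology

theorem _root_.Subgroup.antitone_chain_condition_of_finiteIndex_le {H : Subgroup G}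
    [H.FiniteIndex] {K : ℕ → Subgroup G} (hK : Antitone K) (hHK : ∀ k, H ≤ K k) :
    ∃ n, ∀ k, n ≤ k → K k = K n := by
  have (k : ℕ) : (K k).FiniteIndex := Subgroup.finiteIndex_of_le (hHK k)
  have hmono : Monotone fun k => (K k).index := fun _ _ hkl => Subgroup.index_antitone (hK hkl)
  have hbdd : BddAbove (Set.range fun k => (K k).index) :=
    ⟨H.index, Set.forall_mem_range.2 fun k => Subgroup.index_antitone (hHK k)⟩
  obtain ⟨n, hn⟩ := eventually_atTop.1 <|
    tendsto_pure.1 (nhds_discrete ℕ ▸ tendsto_atTop_ciSup hmono hbdd)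
  refine ⟨n, fun k hk => (hK hk).eq_of_not_lt fun hlt => ?_⟩
  exact (Subgroup.index_strictAnti hlt).ne ((hn n le_rfl).trans (hn k hk).symm)

theorem IsAutLOn.mono {X : Type*} [Group X] [TopologicalSpace X] {S T : Set X} {f : X ≃ₜ X}
    (hST : S ⊆ T) (hf : IsAutLOn X T f) : IsAutLOn X S f :=
  fun s hs => hf s (hST hs)

theorem IsAutLOn.closure {X : Type*} [Group X] [TopologicalSpace X] [ContinuousMul X]
    [T2Space X] {S : Set X} {f : X ≃ₜ X} (hf : IsAutLOn X S f) :
    IsAutLOn X (closure S) f := fun _ hs x =>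
  closure_minimal (fun s hs => hf s hs x)
    (isClosed_eq (f.continuous.comp (continuous_mul_const x)) (continuous_mul_const (f x))) hs

theorem tendsto_tau {Γ : ℕ → Subgroup G} [∀ n, (Γ n).Normal] (hdec : ∀ n, Γ (n + 1) ≤ Γ n)
    {g : G} {h : ℕ → G} (hh : ∀ m, (h m)⁻¹ * g ∈ Γ m) :
    Tendsto (fun m => tau Γ hdec (h m)) atTop (𝓝 (tau Γ hdec g)) := by
  refine tendsto_subtype_rng.2 <| tendsto_pi_nhds.2 fun k => tendsto_nhds_of_eventually_eq ?_
  filter_upwards [eventually_ge_atTop k] with m hm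
  exact QuotientGroup.eq.2 (antitone_nat_of_succ_le hdec hm (hh m))

theorem tau_mem_closure_image {Γ : ℕ → Subgroup G} [∀ n, (Γ n).Normal]
    (hdec : ∀ n, Γ (n + 1) ≤ Γ n) {H : Subgroup G} {g : G} (hg : ∀ k, g ∈ H ⊔ Γ k) :
    tau Γ hdec g ∈ closure (tau Γ hdec '' H) := by
  have happrox : ∀ k, ∃ h ∈ H, h⁻¹ * g ∈ Γ k := fun k => by
    obtain ⟨h, hh, u, hu, rfl⟩ := Subgroup.mem_sup_of_normal_right.1 (hg k)
    exact ⟨h, hh, by rwa [inv_mul_cancel_left]⟩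
  choose h hhH hhΓ using happrox
  exact mem_closure_of_tendsto (tendsto_tau hdec hhΓ)
    (Eventually.of_forall fun m => ⟨h m, hhH m, rfl⟩)

theorem stmt16_general {G : Type*} [Group G] (Γ : ℕ → Subgroup G) [∀ n, (Γ n).Normal]
    (hdec : ∀ n, Γ (n + 1) ≤ Γ n)
    (H : Subgroup G) (hH : H.FiniteIndex) :
    ∃ n : ℕ, (∀ k, n ≤ k → H ⊔ Γ k = H ⊔ Γ n) ∧
      (∀ f : ↥(Odo Γ hdec) ≃ₜ ↥(Odo Γ hdec),
        IsAutLOn ↥(Odo Γ hdec) (tau Γ hdec '' ((H : Subgroup G) : Set G)) f ↔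
          IsAutLOn ↥(Odo Γ hdec) (tau Γ hdec '' ((H ⊔ Γ n : Subgroup G) : Set G)) f) ∧
      (∀ f : ↥(Odo Γ hdec) ≃ₜ ↥(Odo Γ hdec),
        IsAutLOn ↥(Odo Γ hdec) (tau Γ hdec '' ((H ⊔ Γ n : Subgroup G) : Set G)) f →
          IsAutLOn ↥(Odo Γ hdec) (tau Γ hdec '' ((Γ n : Subgroup G) : Set G)) f) := by
  have hΓ : Antitone Γ := antitone_nat_of_succ_le hdec
  obtain ⟨n, hn⟩ := Subgroup.antitone_chain_condition_of_finiteIndex_le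
    (K := fun k => H ⊔ Γ k) (fun _ _ hkl => sup_le_sup_left (hΓ hkl) H) fun _ => le_sup_left
  have hdense : tau Γ hdec '' (H ⊔ Γ n : Subgroup G) ⊆ closure (tau Γ hdec '' H) := by
    rintro _ ⟨g, hg, rfl⟩
    refine tau_mem_closure_image hdec fun k => ?_
    rcases le_total n k with hk | hk
    · rwa [hn k hk]
    · exact sup_le_sup_left (hΓ hk) H hg
  refine ⟨n, hn, fun f => ⟨fun hf => hf.closure.mono hdense, ?_⟩, fun f => ?_⟩
  · exact IsAutLOn.mono (Set.image_mono (SetLike.coe_subset_coe.2 le_sup_left))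
  · exact IsAutLOn.mono (Set.image_mono (SetLike.coe_subset_coe.2 le_sup_right))

/-- for every finite-index `H ≤ G` the subgroups `⟨H,Γₖ⟩` stabilize at some
`n`, and `Aut(X,H)_L = Aut(X,⟨H,Γₙ⟩)_L ⊆ Aut(X,Γₙ)_L`. -/
theorem stmt16 {G : Type*} [Group G] (Γ : ℕ → Subgroup G) [∀ n, (Γ n).Normal]
    [∀ n, (Γ n).FiniteIndex] (hdec : ∀ n, Γ (n + 1) ≤ Γ n)
    (htriv : ∀ g : G, (∀ n, g ∈ Γ n) → g = 1) [Infinite G] (H : Subgroup G) (hH : H.FiniteIndex) :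
    ∃ n : ℕ, (∀ k, n ≤ k → H ⊔ Γ k = H ⊔ Γ n) ∧
      (∀ f : ↥(Odo Γ hdec) ≃ₜ ↥(Odo Γ hdec),
        IsAutLOn ↥(Odo Γ hdec) (tau Γ hdec '' ((H : Subgroup G) : Set G)) f ↔
          IsAutLOn ↥(Odo Γ hdec) (tau Γ hdec '' ((H ⊔ Γ n : Subgroup G) : Set G)) f) ∧
      (∀ f : ↥(Odo Γ hdec) ≃ₜ ↥(Odo Γ hdec),
        IsAutLOn ↥(Odo Γ hdec) (tau Γ hdec '' ((H ⊔ Γ n : Subgroup G) : Set G)) f →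
          IsAutLOn ↥(Odo Γ hdec) (tau Γ hdec '' ((Γ n : Subgroup G) : Set G)) f) :=
  stmt16_general Γ hdec H hH

end OdoPaper
end
end
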